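/- arXiv:2406.01348 — 4 statements merged into one kernel-verified Lean document; each statement's English description precedes it below -/
import Mathlib

section
/- The 5×5 lower-triangular matrix S over Q(p,q), with diagonal entries (q^{-2}, -p^6, -1, p^2 q^2, p^{12}) and subdiagonal entries given by S_{2,1} = p^3 q^{-1}, S_{3,1} = -1, S_{3,2} = p^3 q - p^3 q^{-1}, S_{4,1} = p^{-3} q, S_{4,2} = -p^4 - q^2 + 1, S_{4,3} = p^5 q - p q + p^{-3} q, S_{5,1} = q^2, S_{5,2} = -p^7 q + p^7 q^{-1} - p^3 q^3 + p^3 q, S_{5,3} = p^{12} + p^8 q^2 - p^8 - p^4 q^2 + p^4 + q^2, S_{5,4} = p^9 q - p^9 q^{-1} + p^5 q^3 - p^5 q, satisfies (S P)^3 = p^{12}·Id, where P is the 5×5 antidiagonal permutation matrix with 1's at positions (i, 6-i). -/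
/-!
Scaling `Smat p q * Pmat` by `p ^ 3 * q ^ 2` clears all denominators, so the claim reduces to the
polynomial identity `N ^ 3 = ((p ^ 3 * q ^ 2) ^ 3 * p ^ 12) • 1` for the resulting matrix `N`,
which is checked entry by entry.
-/

/-- The explicit lower-triangular 5×5 braid matrix over `Q(p,q)`. -/
noncomputable def Smat {K : Type*} [Field K] (p q : K) : Matrix (Fin 5) (Fin 5) K :=
  !![q⁻¹ ^ 2, 0, 0, 0, 0;
     p ^ 3 * q⁻¹, -p ^ 6, 0, 0, 0;
     -1, p ^ 3 * q - p ^ 3 * q⁻¹, -1, 0, 0;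
     p⁻¹ ^ 3 * q, -p ^ 4 - q ^ 2 + 1, p ^ 5 * q - p * q + p⁻¹ ^ 3 * q, p ^ 2 * q ^ 2, 0;
     q ^ 2, -(p ^ 7) * q + p ^ 7 * q⁻¹ - p ^ 3 * q ^ 3 + p ^ 3 * q,
       p ^ 12 + p ^ 8 * q ^ 2 - p ^ 8 - p ^ 4 * q ^ 2 + p ^ 4 + q ^ 2,
       p ^ 9 * q - p ^ 9 * q⁻¹ + p ^ 5 * q ^ 3 - p ^ 5 * q, p ^ 12]

/-- The 5×5 antidiagonal permutation matrix with 1's at positions `(i, 6-i)` (1-indexed). -/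
def Pmat {K : Type*} [Field K] : Matrix (Fin 5) (Fin 5) K :=
  Matrix.of fun i j => if (i : ℕ) + (j : ℕ) = 4 then 1 else 0

theorem pow_eq_smul_one_of_smul_eq {K A : Type*} [Field K] [Ring A] [Algebra K A]
    {a b : A} {c d : K} {n : ℕ} (hc : c ≠ 0) (hab : c • a = b)
    (hb : b ^ n = (c ^ n * d) • 1) :
    a ^ n = d • 1 := by
  rw [← inv_smul_smul₀ hc a, hab, smul_pow, hb, smul_smul, ← mul_assoc, inv_pow,
    inv_mul_cancel₀ (pow_ne_zero n hc), one_mul]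

theorem Pmat_eq {K : Type*} [Field K] :
    (Pmat : Matrix (Fin 5) (Fin 5) K) =
      !![0, 0, 0, 0, 1; 0, 0, 0, 1, 0; 0, 0, 1, 0, 0; 0, 1, 0, 0, 0; 1, 0, 0, 0, 0] := by
  ext i j
  fin_cases i <;> fin_cases j <;> rfl

def smatPmatNumerator {R : Type*} [CommRing R] (p q : R) : Matrix (Fin 5) (Fin 5) R :=
  !![0, 0, 0, 0, p ^ 3;
     0, 0, 0, -(p ^ 9 * q ^ 2), p ^ 6 * q;
     0, 0, -(p ^ 3 * q ^ 2), p ^ 6 * q ^ 3 - p ^ 6 * q, -(p ^ 3 * q ^ 2);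
     0, p ^ 5 * q ^ 4, p ^ 8 * q ^ 3 - p ^ 4 * q ^ 3 + q ^ 3,
       -(p ^ 7 * q ^ 2) - p ^ 3 * q ^ 4 + p ^ 3 * q ^ 2, q ^ 3;
     p ^ 15 * q ^ 2, p ^ 12 * q ^ 3 - p ^ 12 * q + p ^ 8 * q ^ 5 - p ^ 8 * q ^ 3,
       p ^ 15 * q ^ 2 + p ^ 11 * q ^ 4 - p ^ 11 * q ^ 2 - p ^ 7 * q ^ 4 + p ^ 7 * q ^ 2
         + p ^ 3 * q ^ 4,
       -(p ^ 10 * q ^ 3) + p ^ 10 * q - p ^ 6 * q ^ 5 + p ^ 6 * q ^ 3, p ^ 3 * q ^ 4]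

theorem smul_Smat_mul_Pmat {K : Type*} [Field K] {p q : K} (hp : p ≠ 0) (hq : q ≠ 0) :
    (p ^ 3 * q ^ 2) • (Smat p q * Pmat) = smatPmatNumerator p q := by
  rw [Pmat_eq]
  ext i j
  fin_cases i <;> fin_cases j <;>
    simp only [Smat, smatPmatNumerator, Matrix.mul_apply, Fin.sum_univ_five, Matrix.smul_apply,
      Matrix.of_apply, Matrix.cons_val, Fin.isValue, smul_eq_mul, Fin.reduceFinMk, Fin.zero_eta,
      Fin.mk_one] <;>
    field_simp <;>
    ring

theorem smatPmatNumerator_pow_three {R : Type*} [CommRing R] (p q : R) :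
    smatPmatNumerator p q ^ 3 = ((p ^ 3 * q ^ 2) ^ 3 * p ^ 12) • 1 := by
  rw [pow_three]
  ext i j
  fin_cases i <;> fin_cases j <;>
    simp only [smatPmatNumerator, Matrix.mul_apply, Fin.sum_univ_five, Matrix.smul_apply,
      Matrix.one_apply, Matrix.of_apply, Matrix.cons_val, Fin.isValue, smul_eq_mul,
      Fin.reduceFinMk, Fin.zero_eta, Fin.mk_one, Fin.reduceEq, if_true, if_false] <;>
    ring

theorem stmt3 {K : Type*} [Field K] (p q : K) (hp : p ≠ 0) (hq : q ≠ 0) :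
    (Smat p q * Pmat) ^ 3 = (p ^ 12) • (1 : Matrix (Fin 5) (Fin 5) K) :=
  pow_eq_smul_one_of_smul_eq (mul_ne_zero (pow_ne_zero 3 hp) (pow_ne_zero 2 hq))
    (smul_Smat_mul_Pmat hp hq) (smatPmatNumerator_pow_three p q)
end

section
/- With S the 5×5 matrix above and S_1 = S, S_2 = P S P (P the antidiagonal permutation matrix), the braid relation S_1 S_2 S_1 = S_2 S_1 S_2 holds in M_5(Q(p,q)). -/
set_option maxHeartbeats 2000000 in
lemma PSP {K : Type*} [Field K] (p q : K) :
    (Pmat * Smat p q * Pmat : Matrix (Fin 5) (Fin 5) K) =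
    !![p ^ 12, p ^ 9 * q - p ^ 9 * q⁻¹ + p ^ 5 * q ^ 3 - p ^ 5 * q,
         p ^ 12 + p ^ 8 * q ^ 2 - p ^ 8 - p ^ 4 * q ^ 2 + p ^ 4 + q ^ 2,
         -(p ^ 7) * q + p ^ 7 * q⁻¹ - p ^ 3 * q ^ 3 + p ^ 3 * q, q ^ 2;
       0, p ^ 2 * q ^ 2, p ^ 5 * q - p * q + p⁻¹ ^ 3 * q, -p ^ 4 - q ^ 2 + 1, p⁻¹ ^ 3 * q;
       0, 0, -1, p ^ 3 * q - p ^ 3 * q⁻¹, -1;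
       0, 0, 0, -p ^ 6, p ^ 3 * q⁻¹;
       0, 0, 0, 0, q⁻¹ ^ 2] := by
  ext i j
  fin_cases i <;> fin_cases j <;>
    simp [Pmat, Smat, Matrix.mul_apply, Fin.sum_univ_five, Matrix.vecHead, Matrix.vecTail, show ((3:Fin 5):ℕ)=3 from rfl, show ((4:Fin 5):ℕ)=4 from rfl]

set_option maxHeartbeats 4000000 in
theorem stmt5 {K : Type*} [Field K] (p q : K) (hp : p ≠ 0) (hq : q ≠ 0) :
    Smat p q * (Pmat * Smat p q * Pmat) * Smat p q
      = (Pmat * Smat p q * Pmat) * Smat p q * (Pmat * Smat p q * Pmat) := by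
  rw [PSP, Smat]
  ext i j
  fin_cases i <;> fin_cases j <;>
    simp only [Matrix.mul_apply, Fin.sum_univ_five, Matrix.cons_val', Matrix.cons_val_zero,
      Matrix.cons_val_one, Matrix.head_cons, Matrix.empty_val', Matrix.cons_val_fin_one,
      Matrix.head_fin_const, Matrix.cons_val_two, Matrix.tail_cons, Matrix.cons_val_three,
      Matrix.cons_val_four, Matrix.of_apply, Fin.reduceFinMk, Matrix.cons_val] <;>
    field_simp [hp, hq] <;> ring_nf <;> field_simp [hp, hq] <;> ring
end

section
/- There is a Hopf algebra homomorphism θ: U_{q'}(sl(2)) → U_q(osp(1|2)) with q = -q'^2, determined by θ(E') = -(q'+q'^{-1})·σE, θ(F') = F, θ([H']) = -(q'+q'^{-1})·σ[H], θ(K'^{±1}) = σK^{±1}; in particular θ respects the defining relations: θ(K'E') = θ(-q·E'K'), θ(F'K') = θ(-q·K'F'), θ(E'F' - F'E') = θ([H']), and θ((q'-q'^{-1})[H']) = θ(K' - K'^{-1}). -/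
/-!
Conjugation by the parity element `σ` is `-1` on the odd generators, so multiplying an odd
generator by `σ` turns `q`-commutation relations with `-1` signs into ordinary ones: with
`q = -q'^2` the relation `K E = q E K` becomes `(σK)(σE) = q'^2 (σE)(σK)`, and the
anticommutator `EF + FE = [H]` becomes the commutator `(σE)F - F(σE) = σ[H]`.
The normalising factor `-(q' + q'⁻¹)` is central, so it passes through every relation.
-/

theorem Commute.mul_mul_mul_of_mul_self_eq_one {A : Type*} [Monoid A] {σ a : A}
    (hσ : σ * σ = 1) (ha : Commute σ a) (b : A) : σ * a * (σ * b) = a * b := by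
  rw [ha.symm.mul_mul_mul_comm, hσ, one_mul]

def QCommute {A : Type*} [Mul A] (q a b : A) : Prop := a * b = q * b * a

namespace QCommute

section Semigroup

variable {A : Type*} [Semigroup A] {p q a b x : A}

theorem mul_right_of_commute (h : QCommute q x b) (hxa : Commute x a) (hqa : Commute q a) :
    QCommute q x (a * b) :=
  calc x * (a * b) = a * (x * b) := hxa.left_comm b
    _ = a * q * b * x := by rw [h]; simp only [mul_assoc]
    _ = q * (a * b) * x := by rw [← hqa.eq]; simp only [mul_assoc]

theorem mul_left (ha : QCommute p a x) (hb : QCommute q b x) (haq : Commute a q) :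
    QCommute (q * p) (a * b) x := by
  unfold QCommute at *
  rw [mul_assoc, hb, ← mul_assoc, ← mul_assoc, haq.eq, mul_assoc q, ha]
  simp only [mul_assoc]

end Semigroup

theorem neg_one_of_conj_eq_neg {A : Type*} [Monoid A] [HasDistribNeg A] {σ x : A}
    (hσ : σ * σ = 1) (hx : σ * x * σ = -x) : QCommute (-1) σ x :=
  calc σ * x = σ * x * (σ * σ) := by rw [hσ, mul_one]
    _ = (-1) * x * σ := by rw [← mul_assoc, hx, neg_one_mul, neg_mul]

theorem commutator_mul_left_eq_mul_anticommutator {A : Type*} [Ring A] {σ y : A}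
    (h : QCommute (-1) σ y) (x : A) : σ * x * y - y * (σ * x) = σ * (x * y + y * x) := by
  have hyσ : y * σ = -(σ * y) := by rw [h, neg_one_mul, neg_mul, neg_neg]
  rw [mul_add, sub_eq_add_neg, mul_assoc, ← mul_assoc y, hyσ, neg_mul, neg_neg, mul_assoc]

end QCommute

theorem stmt6_general {A : Type*} [Ring A] (q' q'i : A)
    (hq'c : ∀ a : A, q' * a = a * q') (hq'ic : ∀ a : A, q'i * a = a * q'i)
    (σ E F H K Ki : A)
    -- defining relations of U_q(osp(1|2)), with q = -q'^2 and q⁻¹ = -q'i^2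
    (hσ2 : σ ^ 2 = 1) (hσE : σ * E * σ = -E) (hσF : σ * F * σ = -F)
    (hσK : σ * K = K * σ) (hσKi : σ * Ki = Ki * σ)
    (hKKi : K * Ki = 1) (hKiK : Ki * K = 1)
    (hKE : K * E = -(q' ^ 2) * E * K)
    (hKF : K * F = -(q'i ^ 2) * F * K)
    (hEF : E * F + F * E = H)
    (hH : (-(q' ^ 2) - -(q'i ^ 2)) * H = K - Ki) :
    -- the sl(2) relations for the images θ(K') = σK, θ(K'⁻¹) = σKi,
    -- θ(E') = -(q'+q'i)σE, θ(F') = F, θ([H']) = -(q'+q'i)σH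
    (σ * K) * (σ * Ki) = 1 ∧ (σ * Ki) * (σ * K) = 1 ∧
      (σ * K) * (-(q' + q'i) * (σ * E)) = q' ^ 2 * (-(q' + q'i) * (σ * E)) * (σ * K) ∧
      (σ * K) * F = q'i ^ 2 * F * (σ * K) ∧
      (-(q' + q'i) * (σ * E)) * F - F * (-(q' + q'i) * (σ * E)) = -(q' + q'i) * (σ * H) ∧
      (q' - q'i) * (-(q' + q'i) * (σ * H)) = σ * K - σ * Ki := by
  have hσσ : σ * σ = 1 := by rw [← sq, hσ2]
  have hc : ∀ a, Commute (-(q' + q'i)) a := fun a => (Commute.add_left (hq'c a) (hq'ic a)).neg_left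
  have hq2 : ∀ a, Commute (-(q' ^ 2)) a := fun a => (Commute.pow_left (hq'c a) 2).neg_left
  have hqi2 : ∀ a, Commute (-(q'i ^ 2)) a := fun a => (Commute.pow_left (hq'ic a) 2).neg_left
  have hσE' := QCommute.neg_one_of_conj_eq_neg hσσ hσE
  have hσF' := QCommute.neg_one_of_conj_eq_neg hσσ hσF
  have hσX : QCommute (-1) σ (-(q' + q'i) * (σ * E)) :=
    (hσE'.mul_right_of_commute (Commute.refl σ) (Commute.neg_one_left σ)).mul_right_of_commute
      (hc σ).symm (hc (-1)).symm
  have hKX : QCommute (-(q' ^ 2)) K (-(q' + q'i) * (σ * E)) :=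
    (QCommute.mul_right_of_commute hKE (Commute.symm hσK) (hq2 σ)).mul_right_of_commute
      (hc K).symm (hc _).symm
  refine ⟨by rw [Commute.mul_mul_mul_of_mul_self_eq_one hσσ hσK, hKKi],
    by rw [Commute.mul_mul_mul_of_mul_self_eq_one hσσ hσKi, hKiK], ?_, ?_, ?_, ?_⟩
  · have h := hσX.mul_left hKX (hq2 σ).symm
    rwa [mul_neg_one, neg_neg] at h
  · have h := hσF'.mul_left hKF (hqi2 σ).symm
    rwa [mul_neg_one, neg_neg] at h
  · rw [mul_assoc, (hc F).symm.left_comm, ← mul_sub,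
      hσF'.commutator_mul_left_eq_mul_anticommutator, hEF]
  · calc (q' - q'i) * (-(q' + q'i) * (σ * H))
          = (-(q' ^ 2) - -(q'i ^ 2)) * (σ * H) := by
            rw [← mul_assoc, mul_neg, sq, sq, ← Commute.mul_self_sub_mul_self_eq' (hq'c q'i),
              neg_sub, sub_neg_eq_add, neg_add_eq_sub]
      _ = σ * ((-(q' ^ 2) - -(q'i ^ 2)) * H) := ((hq2 σ).sub_left (hqi2 σ)).left_comm H
      _ = σ * K - σ * Ki := by rw [hH, mul_sub]

/-- There is a Hopf algebra homomorphism `θ : U_{q'}(sl2) → U_q(osp(1|2))`, `q = -q'^2`,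
with `θ(E') = -(q'+q'⁻¹)σE`, `θ(F') = F`, `θ([H']) = -(q'+q'⁻¹)σ[H]`, `θ(K'^{±1}) = σK^{±1}`.
We formalise this by showing that in any ring `A` containing elements satisfying the
defining relations of `U_q(osp(1|2))` (with central invertible scalar `q'`, inverse `q'i`),
the proposed images satisfy the defining relations of `U_{q'}(sl(2))`. -/
theorem stmt6 {A : Type*} [Ring A] (q' q'i : A)
    (hq'c : ∀ a : A, q' * a = a * q') (hq'ic : ∀ a : A, q'i * a = a * q'i)
    (hq'inv : q' * q'i = 1)
    (σ E F H K Ki : A)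
    -- defining relations of U_q(osp(1|2)), with q = -q'^2 and q⁻¹ = -q'i^2
    (hσ2 : σ ^ 2 = 1) (hσE : σ * E * σ = -E) (hσF : σ * F * σ = -F)
    (hσK : σ * K = K * σ) (hσKi : σ * Ki = Ki * σ) (hσH : σ * H = H * σ)
    (hKKi : K * Ki = 1) (hKiK : Ki * K = 1)
    (hKE : K * E = -(q' ^ 2) * E * K)
    (hKF : K * F = -(q'i ^ 2) * F * K)
    (hEF : E * F + F * E = H)
    (hH : (-(q' ^ 2) - -(q'i ^ 2)) * H = K - Ki) :
    -- the sl(2) relations for the images θ(K') = σK, θ(K'⁻¹) = σKi,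
    -- θ(E') = -(q'+q'i)σE, θ(F') = F, θ([H']) = -(q'+q'i)σH
    (σ * K) * (σ * Ki) = 1 ∧ (σ * Ki) * (σ * K) = 1 ∧
      (σ * K) * (-(q' + q'i) * (σ * E)) = q' ^ 2 * (-(q' + q'i) * (σ * E)) * (σ * K) ∧
      (σ * K) * F = q'i ^ 2 * F * (σ * K) ∧
      (-(q' + q'i) * (σ * E)) * F - F * (-(q' + q'i) * (σ * E)) = -(q' + q'i) * (σ * H) ∧
      (q' - q'i) * (-(q' + q'i) * (σ * H)) = σ * K - σ * Ki :=
  stmt6_general q' q'i hq'c hq'ic σ E F H K Ki hσ2 hσE hσF hσK hσKi hKKi hKiK hKE hKF hEF hH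
end

section
/- In the algebra A of the previous statement, U = δ·(H-ξ)(H-ζ)(H-ζ*)(H-τ)/((φ-ξ)(φ-ζ)(φ-ζ*)(φ-τ)) and K = φ·(H-ξ)(H-ζ)(H-ζ*)(H-φ)/((τ-ξ)(τ-ζ)(τ-ζ*)(τ-φ)); in particular A is generated by H alone. -/
/-- The two-variable quantum integer `[aν+b] = (p^a q^b - p^{-a} q^{-b})/(q - q⁻¹)`. -/
noncomputable def qint {K : Type*} [Field K] (p q : K) (a b : ℤ) : K :=
  (p ^ a * q ^ b - p ^ (-a) * q ^ (-b)) / (q - q⁻¹)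

/-- `δ = [6ν+1][5ν-1][4ν]/([ν+1][2ν])`. -/
noncomputable def deltaE {K : Type*} [Field K] (p q : K) : K :=
  qint p q 6 1 * qint p q 5 (-1) * qint p q 4 0 / (qint p q 1 1 * qint p q 2 0)

/-- `φ = [3ν][6ν+2][4ν-2]/([ν][3ν+1][2ν-1])`. -/
noncomputable def phiE {K : Type*} [Field K] (p q : K) : K :=
  qint p q 3 0 * qint p q 6 2 * qint p q 4 (-2)
    / (qint p q 1 0 * qint p q 3 1 * qint p q 2 (-1))

/-- `τ = ([4ν]/[2ν])(([6ν+2]/[3ν+1])([4ν-2]/[2ν-1])([3ν]/[ν]) + (q-q⁻¹)²[ν+1][5ν]/[ν])`. -/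
noncomputable def tauE {K : Type*} [Field K] (p q : K) : K :=
  (qint p q 4 0 / qint p q 2 0) *
    ((qint p q 6 2 / qint p q 3 1) * (qint p q 4 (-2) / qint p q 2 (-1)) *
        (qint p q 3 0 / qint p q 1 0) +
      (q - q⁻¹) ^ 2 * qint p q 1 1 * (qint p q 5 0 / qint p q 1 0))

/-- `ξ = (q-q⁻¹)(pq - p⁻¹q⁻¹)`. -/
noncomputable def xiE {K : Type*} [Field K] (p q : K) : K :=
  (q - q⁻¹) * (p * q - p⁻¹ * q⁻¹)

/-- `ζ = -[4ν-2]/([2ν-1][ν])`. -/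
noncomputable def zetaE {K : Type*} [Field K] (p q : K) : K :=
  -(qint p q 4 (-2) / (qint p q 2 (-1) * qint p q 1 0))

/-- `ζ* = [6ν+2][ν+1]/([3ν+1][ν])`. -/
noncomputable def zetaStarE {K : Type*} [Field K] (p q : K) : K :=
  qint p q 6 2 * qint p q 1 1 / (qint p q 3 1 * qint p q 1 0)

/-
The cubic relation writes `(H - ξ)(H - ζ)(H - ζ*)` as a combination `c U + d K`, and `U`, `K` are
eigenvectors of multiplication by `H` with eigenvalues `φ ≠ τ`. Multiplying by `H - τ` kills the
`K`-term and scales the `U`-term by `φ - τ`, so `U` is a nonzero multiple of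
`(H - ξ)(H - ζ)(H - ζ*)(H - τ)`; symmetrically for `K` with `H - φ`.
-/

section Interpolation

variable {F A : Type*} [Field F] [Ring A] [Algebra F A]

theorem mul_sub_smul_one_of_mul_eq_smul {U H : A} {a : F} (b : F) (hU : U * H = a • U) :
    U * (H - b • 1) = (a - b) • U := by
  rw [mul_sub, hU, mul_smul_comm, mul_one, sub_smul]

theorem mul_sub_smul_one_of_eq_add {X H U V : A} {a b c d : F} (hX : X = c • U + d • V)
    (hU : U * H = a • U) (hV : V * H = b • V) :
    X * (H - b • 1) = (c * (a - b)) • U := by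
  rw [hX, add_mul, smul_mul_assoc, smul_mul_assoc, mul_sub_smul_one_of_mul_eq_smul b hU,
    mul_sub_smul_one_of_mul_eq_smul b hV, sub_self, zero_smul, smul_zero, add_zero, smul_smul]

theorem eq_inv_smul_mul_sub_smul_one {X H U V : A} {a b c d : F} (hX : X = c • U + d • V)
    (hU : U * H = a • U) (hV : V * H = b • V) (hc : c * (a - b) ≠ 0) :
    U = (c * (a - b))⁻¹ • (X * (H - b • 1)) := by
  rw [mul_sub_smul_one_of_eq_add hX hU hV, inv_smul_smul₀ hc]

end Interpolation

theorem stmt14_general {F : Type*} [Field F] (p q : F) (hδ : deltaE p q ≠ 0) (hφ : phiE p q ≠ 0)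
    (hdist : List.Pairwise (· ≠ ·)
      [xiE p q, zetaE p q, zetaStarE p q, phiE p q, tauE p q])
    {A : Type*} [CommRing A] [Algebra F A] (H K U : A)
    (hUH : U * H = phiE p q • U)
    (hKH : K * H = tauE p q • K)
    (hcubic :
      (H - xiE p q • 1) * (H - zetaE p q • 1) * (H - zetaStarE p q • 1)
        = ((deltaE p q)⁻¹ * (phiE p q - xiE p q) * (phiE p q - zetaE p q) *
              (phiE p q - zetaStarE p q)) • U +
          ((phiE p q)⁻¹ * (tauE p q - xiE p q) * (tauE p q - zetaE p q) *
              (tauE p q - zetaStarE p q)) • K) :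
    U = (deltaE p q /
          ((phiE p q - xiE p q) * (phiE p q - zetaE p q) * (phiE p q - zetaStarE p q) *
            (phiE p q - tauE p q))) •
        ((H - xiE p q • 1) * (H - zetaE p q • 1) * (H - zetaStarE p q • 1) *
          (H - tauE p q • 1)) ∧
      K = (phiE p q /
            ((tauE p q - xiE p q) * (tauE p q - zetaE p q) * (tauE p q - zetaStarE p q) *
              (tauE p q - phiE p q))) •
          ((H - xiE p q • 1) * (H - zetaE p q • 1) * (H - zetaStarE p q • 1) *
            (H - phiE p q • 1)) := by
  simp only [List.pairwise_cons, List.mem_cons, List.not_mem_nil, forall_eq_or_imp] at hdist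
  obtain ⟨⟨-, -, hξφ, hξτ, -⟩, ⟨-, hζφ, hζτ, -⟩, ⟨hζ'φ, hζ'τ, -⟩, ⟨hφτ, -⟩, -⟩ := hdist
  constructor
  · convert eq_inv_smul_mul_sub_smul_one hcubic hUH hKH ?_ using 2
    · simp only [div_eq_mul_inv, mul_inv, inv_inv]
      ring
    · simp [sub_eq_zero, hδ, hξφ.symm, hζφ.symm, hζ'φ.symm, hφτ]
  · convert eq_inv_smul_mul_sub_smul_one (hcubic.trans (add_comm _ _)) hKH hUH ?_ using 2
    · simp only [div_eq_mul_inv, mul_inv, inv_inv]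
      ring
    · simp [sub_eq_zero, hφ, hξτ.symm, hζτ.symm, hζ'τ.symm, hφτ.symm]

/-- In any commutative `Q(p,q)`-algebra `A` with elements `H, K, U` satisfying the defining
relations of the two-string algebra `A(2)`, and assuming the five eigenvalues
`ξ, ζ, ζ*, φ, τ` are pairwise distinct, `U` and `K` are recovered from `H` by Lagrange
interpolation. -/
theorem stmt14 {F : Type*} [Field F] (p q : F) (hp : p ≠ 0) (hq : q ≠ 0)
    (hqq : q - q⁻¹ ≠ 0) (hδ : deltaE p q ≠ 0) (hφ : phiE p q ≠ 0)
    (hdist : List.Pairwise (· ≠ ·)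
      [xiE p q, zetaE p q, zetaStarE p q, phiE p q, tauE p q])
    {A : Type*} [CommRing A] [Algebra F A] (H K U : A)
    (hU2 : U * U = deltaE p q • U)
    (hUK : U * K = 0) (hKU : K * U = 0)
    (hK2 : K * K = phiE p q • K)
    (hHU : H * U = phiE p q • U) (hUH : U * H = phiE p q • U)
    (hHK : H * K = tauE p q • K) (hKH : K * H = tauE p q • K)
    (hcubic :
      (H - xiE p q • 1) * (H - zetaE p q • 1) * (H - zetaStarE p q • 1)
        = ((deltaE p q)⁻¹ * (phiE p q - xiE p q) * (phiE p q - zetaE p q) *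
              (phiE p q - zetaStarE p q)) • U +
          ((phiE p q)⁻¹ * (tauE p q - xiE p q) * (tauE p q - zetaE p q) *
              (tauE p q - zetaStarE p q)) • K) :
    U = (deltaE p q /
          ((phiE p q - xiE p q) * (phiE p q - zetaE p q) * (phiE p q - zetaStarE p q) *
            (phiE p q - tauE p q))) •
        ((H - xiE p q • 1) * (H - zetaE p q • 1) * (H - zetaStarE p q • 1) *
          (H - tauE p q • 1)) ∧
      K = (phiE p q /
            ((tauE p q - xiE p q) * (tauE p q - zetaE p q) * (tauE p q - zetaStarE p q) *
              (tauE p q - phiE p q))) •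
          ((H - xiE p q • 1) * (H - zetaE p q • 1) * (H - zetaStarE p q • 1) *
            (H - phiE p q • 1)) :=
  stmt14_general p q hδ hφ hdist H K U hUH hKH hcubic
end
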